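/- arXiv:0902.0953 — 3 statements merged into one kernel-verified Lean document; each statement's English description precedes it below -/
import Mathlib

section
/- Necklace bracket formula for the second bracket: let n ≥ 1, let r, s ≥ 1, and let a₁,…,a_r and b₁,…,b_s be words in which each letter is one of the two symbols A, B. Define F₁(A,B) = tr(a₁⋯a_r) and F₂(A,B) = tr(b₁⋯b_s) by substituting the matrices A, B for the symbols. For each i let c_i = a_{i+1}⋯a_r a₁⋯a_{i−1} and for each j let d_j = b_{j+1}⋯b_s b₁⋯b_{j−1} (the products of the remaining letters in cyclic order, with A, B substituted). Then {F₁,F₂}_1 = Σ_{(i,j): a_i = B, b_j = A} tr(A c_i d_j) − Σ_{(i,j): a_i = A, b_j = B} tr(A d_j c_i) + Σ_{(i,j): a_i = B, b_j = B} tr(B[c_i, d_j]) identically on Mat_n(ℝ) × Mat_n(ℝ). -/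
/- STATEMENT 6: necklace bracket formula for the second bracket. For words
a₁⋯a_r and b₁⋯b_s in the two letters A, B (a letter is encoded as a `Bool`:
`true` stands for the symbol A and `false` for the symbol B), define
F₁(A,B) = tr(a₁⋯a_r), F₂(A,B) = tr(b₁⋯b_s); then
{F₁,F₂}_1 = Σ_{(i,j): a_i = B, b_j = A} tr(A c_i d_j)
          − Σ_{(i,j): a_i = A, b_j = B} tr(A d_j c_i)
          + Σ_{(i,j): a_i = B, b_j = B} tr(B[c_i, d_j]),
where c_i = a_{i+1}⋯a_r a₁⋯a_{i−1} and d_j = b_{j+1}⋯b_s b₁⋯b_{j−1}. -/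

attribute [local instance] Matrix.frobeniusNormedAddCommGroup Matrix.frobeniusNormedSpace

/-- The space of real n×n matrices. -/
abbrev Mat (n : ℕ) := Matrix (Fin n) (Fin n) ℝ

/-- The first component ξ_F of the gradient of F : Mat_n × Mat_n → ℝ,
characterized by dF_{(A,B)}(V,W) = tr(ξ_F V) + tr(η_F W); encoded via the
Fréchet derivative as (ξ_F)_{ij} = dF(E_{ji}, 0), since tr(ξ E_{ji}) = ξ_{ij}. -/
noncomputable def gradA {n : ℕ} (F : Mat n × Mat n → ℝ) (p : Mat n × Mat n) : Mat n :=
  Matrix.of fun i j => fderiv ℝ F p (Matrix.single j i 1, 0)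

/-- The second component η_F of the gradient of F : Mat_n × Mat_n → ℝ. -/
noncomputable def gradB {n : ℕ} (F : Mat n × Mat n → ℝ) (p : Mat n × Mat n) : Mat n :=
  Matrix.of fun i j => fderiv ℝ F p (0, Matrix.single j i 1)

/-- Substitute the matrices A, B for the symbols: `true` ↦ A, `false` ↦ B. -/
def subst {n : ℕ} (A B : Mat n) : Bool → Mat n := fun s => if s then A else B

/-- The (ordered) product of the word w with A, B substituted for the symbols. -/
def wordProd {n : ℕ} (A B : Mat n) (w : List Bool) : Mat n := (w.map (subst A B)).prod

/-- The word of the remaining letters in cyclic order after removing the letter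
at (0-based) position i: a_{i+1}⋯a_r a₁⋯a_{i−1}. -/
def cyc (w : List Bool) (i : ℕ) : List Bool := w.drop (i + 1) ++ w.take i

/-- The trace function F(A,B) = tr(w₁⋯w_r) associated to a word w. -/
def traceWord (n : ℕ) (w : List Bool) : Mat n × Mat n → ℝ :=
  fun p => Matrix.trace (wordProd p.1 p.2 w)

/-- The second Poisson bracket
{F,G}_1(A,B) = tr(A(η_F ξ_G − η_G ξ_F) + B[η_F, η_G]). -/
noncomputable def bracket1 {n : ℕ} (F G : Mat n × Mat n → ℝ) (p : Mat n × Mat n) : ℝ :=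
  Matrix.trace (p.1 * (gradB F p * gradA G p - gradB G p * gradA F p)
    + p.2 * (gradB F p * gradB G p - gradB G p * gradB F p))

/-! The differential of `(A, B) ↦ tr(w₁⋯w_r)` in the direction `(V, W)` is, by the product rule
and the cyclicity of the trace, `Σ_i tr(V_i c_i)`, where `V_i` is `V` or `W` according to the
letter `w_i`. So `ξ_F` and `η_F` are the sums of the `c_i` over the positions carrying `A`,
resp. `B`, and the bracket expands bilinearly into the three double sums. -/

open Matrix

lemma fderiv_list_prod_apply {ι 𝕜 E 𝔸 : Type*} [NontriviallyNormedField 𝕜]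
    [NormedAddCommGroup E] [NormedSpace 𝕜 E] [NormedRing 𝔸] [NormedAlgebra 𝕜 𝔸]
    {f : ι → E → 𝔸} {f' : ι → E →L[𝕜] 𝔸} {l : List ι} {x : E}
    (h : ∀ i ∈ l, HasFDerivAt (f i) (f' i) x) (v : E) :
    fderiv 𝕜 (fun x => (l.map (f · x)).prod) x v =
      ∑ i : Fin l.length, ((l.take i).map (f · x)).prod * f' l[i] v *
        ((l.drop (i + 1)).map (f · x)).prod := by
  rw [(HasFDerivAt.list_prod' h).fderiv, _root_.sum_apply]
  simp [mul_assoc]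

section TraceWord

variable {n : ℕ}

def cycSum (A B : Mat n) (w : List Bool) (s : Bool) : Mat n :=
  ∑ i : Fin w.length, if w[i] = s then wordProd A B (cyc w i) else 0

lemma hasFDerivAt_subst (s : Bool) (p : Mat n × Mat n) :
    HasFDerivAt (fun q : Mat n × Mat n => subst q.1 q.2 s)
      (if s then ContinuousLinearMap.fst ℝ _ _ else ContinuousLinearMap.snd ℝ _ _) p := by
  cases s
  · exact hasFDerivAt_snd
  · exact hasFDerivAt_fst

lemma differentiableAt_wordProd (w : List Bool) (p : Mat n × Mat n) :
    DifferentiableAt ℝ (fun q : Mat n × Mat n => wordProd q.1 q.2 w) p :=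
  let _ : NormedRing (Mat n) := frobeniusNormedRing
  let _ : NormedAlgebra ℝ (Mat n) := frobeniusNormedAlgebra
  (HasFDerivAt.list_prod' fun s _ => hasFDerivAt_subst s p).differentiableAt

lemma fderiv_wordProd_apply (w : List Bool) (p q : Mat n × Mat n) :
    fderiv ℝ (fun q : Mat n × Mat n => wordProd q.1 q.2 w) p q =
      ∑ i : Fin w.length, wordProd p.1 p.2 (w.take i) * subst q.1 q.2 w[i] *
        wordProd p.1 p.2 (w.drop (i + 1)) := by
  let _ : NormedRing (Mat n) := frobeniusNormedRing
  let _ : NormedAlgebra ℝ (Mat n) := frobeniusNormedAlgebra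
  -- The product rule needs a normed algebra structure; the Frobenius one agrees with the normed
  -- group structure of `Mat n` only up to unfolding, hence `trans` rather than `rw`.
  refine (fderiv_list_prod_apply (l := w) (fun s _ => hasFDerivAt_subst s p) q).trans
    (Finset.sum_congr rfl fun i _ => ?_)
  cases w[i] <;> rfl

lemma fderiv_traceWord_apply (w : List Bool) (p : Mat n × Mat n) (V W : Mat n) :
    fderiv ℝ (traceWord n w) p (V, W) =
      trace (cycSum p.1 p.2 w true * V) + trace (cycSum p.1 p.2 w false * W) := by
  let T : Mat n →L[ℝ] ℝ := LinearMap.toContinuousLinearMap (traceLinearMap (Fin n) ℝ ℝ)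
  have h : HasFDerivAt (traceWord n w)
      (T.comp (fderiv ℝ (fun q : Mat n × Mat n => wordProd q.1 q.2 w) p)) p :=
    T.hasFDerivAt.comp p (differentiableAt_wordProd w p).hasFDerivAt
  rw [h.fderiv, ContinuousLinearMap.comp_apply, fderiv_wordProd_apply, map_sum]
  simp only [cycSum, Finset.sum_mul, trace_sum, ← Finset.sum_add_distrib]
  refine Finset.sum_congr rfl fun i _ => ?_
  have hcyc : trace (wordProd p.1 p.2 (w.take i) * subst V W w[i] *
      wordProd p.1 p.2 (w.drop (i + 1))) = trace (subst V W w[i] * wordProd p.1 p.2 (cyc w i)) := by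
    simp only [cyc, wordProd, List.map_append, List.prod_append]
    rw [mul_assoc, trace_mul_comm, mul_assoc]
  rw [LinearMap.coe_toContinuousLinearMap', traceLinearMap_apply, hcyc]
  cases w[i] <;> simp [subst, trace_mul_comm V, trace_mul_comm W]

lemma gradA_eq_of_fderiv {F : Mat n × Mat n → ℝ} {p : Mat n × Mat n} {ξ : Mat n}
    (h : ∀ V, fderiv ℝ F p (V, 0) = trace (ξ * V)) : gradA F p = ξ := by
  ext i j
  simp [gradA, h, trace_mul_single]

lemma gradB_eq_of_fderiv {F : Mat n × Mat n → ℝ} {p : Mat n × Mat n} {η : Mat n}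
    (h : ∀ W, fderiv ℝ F p (0, W) = trace (η * W)) : gradB F p = η := by
  ext i j
  simp [gradB, h, trace_mul_single]

lemma gradA_traceWord (w : List Bool) (A B : Mat n) :
    gradA (traceWord n w) (A, B) = cycSum A B w true :=
  gradA_eq_of_fderiv fun V => by simp [fderiv_traceWord_apply]

lemma gradB_traceWord (w : List Bool) (A B : Mat n) :
    gradB (traceWord n w) (A, B) = cycSum A B w false :=
  gradB_eq_of_fderiv fun W => by simp [fderiv_traceWord_apply]

lemma trace_mul_cycSum_mul_cycSum (M A B : Mat n) (u v : List Bool) (s t : Bool) :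
    trace (M * (cycSum A B u s * cycSum A B v t)) =
      ∑ i : Fin u.length, ∑ j : Fin v.length, if u[i] = s ∧ v[j] = t then
        trace (M * (wordProd A B (cyc u i) * wordProd A B (cyc v j))) else 0 := by
  simp only [cycSum, Finset.sum_mul_sum, ite_zero_mul_ite_zero]
  simp only [Matrix.mul_sum, mul_ite, mul_zero, trace_sum, apply_ite trace, trace_zero]

end TraceWord

theorem necklace_formula_bracket1_general (n : ℕ)
    (a b : List Bool) (A B : Mat n) :
    bracket1 (traceWord n a) (traceWord n b) (A, B) =
      (∑ i : Fin a.length, ∑ j : Fin b.length,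
        if a.get i = false ∧ b.get j = true then
          Matrix.trace (A * (wordProd A B (cyc a i) * wordProd A B (cyc b j))) else 0)
      - (∑ i : Fin a.length, ∑ j : Fin b.length,
        if a.get i = true ∧ b.get j = false then
          Matrix.trace (A * (wordProd A B (cyc b j) * wordProd A B (cyc a i))) else 0)
      + (∑ i : Fin a.length, ∑ j : Fin b.length,
        if a.get i = false ∧ b.get j = false then
          Matrix.trace (B * (wordProd A B (cyc a i) * wordProd A B (cyc b j)
            - wordProd A B (cyc b j) * wordProd A B (cyc a i))) else 0) := by
  simp only [bracket1, gradA_traceWord, gradB_traceWord, mul_sub, trace_add, trace_sub,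
    trace_mul_cycSum_mul_cycSum, List.get_eq_getElem]
  rw [Finset.sum_comm (γ := Fin b.length), Finset.sum_comm (γ := Fin b.length)]
  simp only [and_comm, Fin.getElem_fin, ← Finset.sum_sub_distrib, ite_sub_ite, sub_zero]

theorem necklace_formula_bracket1 (n : ℕ) (hn : 1 ≤ n)
    (a b : List Bool) (ha : 1 ≤ a.length) (hb : 1 ≤ b.length) (A B : Mat n) :
    bracket1 (traceWord n a) (traceWord n b) (A, B) =
      (∑ i : Fin a.length, ∑ j : Fin b.length,
        if a.get i = false ∧ b.get j = true then
          Matrix.trace (A * (wordProd A B (cyc a i) * wordProd A B (cyc b j))) else 0)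
      - (∑ i : Fin a.length, ∑ j : Fin b.length,
        if a.get i = true ∧ b.get j = false then
          Matrix.trace (A * (wordProd A B (cyc b j) * wordProd A B (cyc a i))) else 0)
      + (∑ i : Fin a.length, ∑ j : Fin b.length,
        if a.get i = false ∧ b.get j = false then
          Matrix.trace (B * (wordProd A B (cyc a i) * wordProd A B (cyc b j)
            - wordProd A B (cyc b j) * wordProd A B (cyc a i))) else 0) :=
  necklace_formula_bracket1_general n a b A B
end

section
/- Let n ≥ 1 and for 1 ≤ k define I_k(A,B) = (1/k) tr(A^k) and J_k(A,B) = tr(A^{k−1} B) on Mat_n(ℝ) × Mat_n(ℝ). Then for all k, l ≥ 1: {I_k, I_l}_0 = 0; {J_l, I_k}_0 = (k+l−2) I_{k+l−2} whenever k+l ≥ 3, while {J_1, I_1}_0 = n; and {J_k, J_l}_0 = (l−k) J_{k+l−2} whenever k+l ≥ 3 (and {J_1,J_1}_0 = 0). All identities hold pointwise on Mat_n(ℝ) × Mat_n(ℝ). -/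
/- STATEMENT 7: for I_k(A,B) = (1/k) tr(A^k) and J_k(A,B) = tr(A^{k−1} B) one
has, with respect to the first bracket {F,G}_0(A,B) = tr(η_F ξ_G − ξ_F η_G):
{I_k,I_l}_0 = 0; {J_l,I_k}_0 = (k+l−2) I_{k+l−2} whenever k+l ≥ 3, while
{J_1,I_1}_0 = n; {J_k,J_l}_0 = (l−k) J_{k+l−2} whenever k+l ≥ 3, and
{J_1,J_1}_0 = 0; pointwise on Mat_n(ℝ) × Mat_n(ℝ). -/

attribute [local instance] Matrix.frobeniusNormedAddCommGroup Matrix.frobeniusNormedSpace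

/-- The first Poisson (canonical) bracket {F,G}_0(A,B) = tr(η_F ξ_G − ξ_F η_G). -/
noncomputable def bracket0 {n : ℕ} (F G : Mat n × Mat n → ℝ) (p : Mat n × Mat n) : ℝ :=
  Matrix.trace (gradB F p * gradA G p - gradA F p * gradB G p)

/-- I_k(A,B) = (1/k) tr(A^k). -/
noncomputable def Ifun (n k : ℕ) : Mat n × Mat n → ℝ :=
  fun p => (1 / (k : ℝ)) * Matrix.trace (p.1 ^ k)

/-- J_k(A,B) = tr(A^{k−1} B). -/
noncomputable def Jfun (n k : ℕ) : Mat n × Mat n → ℝ :=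
  fun p => Matrix.trace (p.1 ^ (k - 1) * p.2)

/-!
Differentiating `X ↦ X ^ m` gives `V ↦ ∑ Xⁱ V X^(m-1-i)`, so by cyclicity of the trace the
gradients are `ξ_{I_k} = A^(k-1)`, `η_{I_k} = 0`, `η_{J_l} = A^(l-1)` and
`ξ_{J_l} = ∑_{i<l-1} Aⁱ B A^(l-2-i)`. The brackets of the `I`'s vanish since `η_I = 0`, and
`{J_l, I_k}_0 = tr(A^(k+l-2))`. In `{J_k, J_l}_0` each of the `l-1` terms of `tr(A^(k-1) ξ_{J_l})`
and each of the `k-1` terms of `tr(ξ_{J_k} A^(l-1))` is, again by cyclicity, `tr(A^(k+l-3) B)`,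
which gives the coefficient `(l-1) - (k-1) = l - k`.
-/

open Matrix Finset

def powDeriv {α : Type*} [Semiring α] (m : ℕ) (a b : α) : α :=
  ∑ i ∈ range m, a ^ i * b * a ^ (m - 1 - i)

theorem powDeriv_eq_sum_range_reflect {α : Type*} [Semiring α] (m : ℕ) (a b : α) :
    powDeriv m a b = ∑ i ∈ range m, a ^ (m - 1 - i) * b * a ^ i := by
  rw [powDeriv, ← sum_range_reflect (fun i => a ^ i * b * a ^ (m - 1 - i))]
  refine sum_congr rfl fun i hi => ?_
  rw [mem_range] at hi
  congr 2
  omega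

section NormedAlgebra

variable {𝔸 : Type*} [NormedRing 𝔸] [NormedAlgebra ℝ 𝔸]

theorem fderiv_fst_pow_apply (k : ℕ) (p : 𝔸 × 𝔸) (V W : 𝔸) :
    fderiv ℝ (fun q : 𝔸 × 𝔸 => q.1 ^ k) p (V, W) = powDeriv k p.1 V := by
  rw [(hasFDerivAt_fst.fun_pow' k).fderiv, powDeriv_eq_sum_range_reflect]
  simp

theorem fderiv_fst_pow_mul_snd_apply (m : ℕ) (p : 𝔸 × 𝔸) (V W : 𝔸) :
    fderiv ℝ (fun q : 𝔸 × 𝔸 => q.1 ^ m * q.2) p (V, W)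
      = p.1 ^ m * W + powDeriv m p.1 V * p.2 := by
  rw [((hasFDerivAt_fst.fun_pow' m).fun_mul' hasFDerivAt_snd).fderiv,
    powDeriv_eq_sum_range_reflect]
  simp

end NormedAlgebra

namespace Matrix

variable {ι R : Type*} [Fintype ι] [DecidableEq ι] [CommSemiring R]

theorem trace_pow_mul_mul_pow (A C : Matrix ι ι R) (a b : ℕ) :
    trace (A ^ a * C * A ^ b) = trace (A ^ (b + a) * C) := by
  rw [trace_mul_cycle, ← pow_add]

theorem trace_pow_mul_powDeriv (A B : Matrix ι ι R) (j m : ℕ) :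
    trace (A ^ j * powDeriv m A B) = m * trace (A ^ (j + m - 1) * B) := by
  have hterm : ∀ i ∈ range m,
      trace (A ^ j * (A ^ i * B * A ^ (m - 1 - i))) = trace (A ^ (j + m - 1) * B) := by
    intro i hi
    rw [mem_range] at hi
    rw [← mul_assoc, ← mul_assoc, ← pow_add, trace_pow_mul_mul_pow]
    congr 3
    omega
  rw [powDeriv, mul_sum, trace_sum, sum_congr rfl hterm, sum_const, card_range, nsmul_eq_mul]

theorem trace_powDeriv_mul_pow (A B : Matrix ι ι R) (j m : ℕ) :
    trace (powDeriv m A B * A ^ j) = m * trace (A ^ (j + m - 1) * B) := by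
  rw [trace_mul_comm, trace_pow_mul_powDeriv]

theorem trace_powDeriv (A B : Matrix ι ι R) (m : ℕ) :
    trace (powDeriv m A B) = m * trace (A ^ (m - 1) * B) := by
  simpa using trace_pow_mul_powDeriv A B 0 m

theorem trace_powDeriv_mul_comm (A V B : Matrix ι ι R) (m : ℕ) :
    trace (powDeriv m A V * B) = trace (powDeriv m A B * V) := by
  rw [powDeriv_eq_sum_range_reflect m A B, powDeriv, sum_mul, sum_mul, trace_sum, trace_sum]
  refine sum_congr rfl fun i _ => ?_
  rw [mul_assoc, trace_mul_comm, ← mul_assoc]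

end Matrix

section Gradient

attribute [local instance] Matrix.frobeniusNormedRing Matrix.frobeniusNormedAlgebra

variable {n : ℕ}

section
variable {E : Type*} [NormedAddCommGroup E] [NormedSpace ℝ E] {g : E → Mat n} {x : E}

theorem fderiv_const_mul_trace_apply (c : ℝ) (hg : DifferentiableAt ℝ g x) (v : E) :
    fderiv ℝ (fun y => c * trace (g y)) x v = c * trace (fderiv ℝ g x v) := by
  let traceCLM : Mat n →L[ℝ] ℝ :=
    LinearMap.toContinuousLinearMap (traceLinearMap (Fin n) ℝ ℝ)
  have h : HasFDerivAt (fun y => c * trace (g y)) (c • traceCLM.comp (fderiv ℝ g x)) x :=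
    (traceCLM.hasFDerivAt.comp x hg.hasFDerivAt).const_mul c
  rw [h.fderiv]
  rfl

theorem fderiv_trace_apply (hg : DifferentiableAt ℝ g x) (v : E) :
    fderiv ℝ (fun y => trace (g y)) x v = trace (fderiv ℝ g x v) := by
  simpa using fderiv_const_mul_trace_apply 1 hg v

end

theorem gradA_gradB_eq_of_fderiv {F : Mat n × Mat n → ℝ} {p : Mat n × Mat n} {ξ η : Mat n}
    (h : ∀ V W, fderiv ℝ F p (V, W) = trace (ξ * V) + trace (η * W)) :
    gradA F p = ξ ∧ gradB F p = η := by
  constructor <;> ext i j <;> simp [gradA, gradB, h, trace_mul_single]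

/- The `fderiv` in `gradA` and `gradB` uses the product topology of `Matrix`, while the lemmas on
normed algebras produce the definitionally equal Frobenius one, so they are applied up to
defeq (`exact`, `congrArg`) rather than by `rw`. -/
theorem fderiv_Ifun_apply {k : ℕ} (hk : 1 ≤ k) (p : Mat n × Mat n) (V W : Mat n) :
    fderiv ℝ (Ifun n k) p (V, W) = trace (p.1 ^ (k - 1) * V) := by
  have hk' : (k : ℝ) ≠ 0 := by positivity
  calc fderiv ℝ (Ifun n k) p (V, W)
      = 1 / k * trace (fderiv ℝ (fun q : Mat n × Mat n => q.1 ^ k) p (V, W)) :=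
        fderiv_const_mul_trace_apply _ (by fun_prop) _
    _ = 1 / k * trace (powDeriv k p.1 V) := by congr 2; exact fderiv_fst_pow_apply k p V W
    _ = trace (p.1 ^ (k - 1) * V) := by rw [trace_powDeriv]; field_simp

theorem fderiv_Jfun_apply (l : ℕ) (p : Mat n × Mat n) (V W : Mat n) :
    fderiv ℝ (Jfun n l) p (V, W)
      = trace (powDeriv (l - 1) p.1 p.2 * V) + trace (p.1 ^ (l - 1) * W) := by
  calc fderiv ℝ (Jfun n l) p (V, W)
      = trace (fderiv ℝ (fun q : Mat n × Mat n => q.1 ^ (l - 1) * q.2) p (V, W)) :=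
        fderiv_trace_apply (by fun_prop) _
    _ = trace (p.1 ^ (l - 1) * W + powDeriv (l - 1) p.1 V * p.2) :=
        congrArg trace (fderiv_fst_pow_mul_snd_apply _ p V W)
    _ = _ := by rw [trace_add, trace_powDeriv_mul_comm, add_comm]

theorem grad_Ifun {k : ℕ} (hk : 1 ≤ k) (p : Mat n × Mat n) :
    gradA (Ifun n k) p = p.1 ^ (k - 1) ∧ gradB (Ifun n k) p = 0 :=
  gradA_gradB_eq_of_fderiv fun V W => by simp [fderiv_Ifun_apply hk]

theorem grad_Jfun (l : ℕ) (p : Mat n × Mat n) :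
    gradA (Jfun n l) p = powDeriv (l - 1) p.1 p.2 ∧ gradB (Jfun n l) p = p.1 ^ (l - 1) :=
  gradA_gradB_eq_of_fderiv (fderiv_Jfun_apply l p)

end Gradient

theorem IJ_bracket0_relations_general (n : ℕ) (k l : ℕ)
    (hk : 1 ≤ k) (hl : 1 ≤ l) (A B : Mat n) :
    bracket0 (Ifun n k) (Ifun n l) (A, B) = 0 ∧
    (3 ≤ k + l →
      bracket0 (Jfun n l) (Ifun n k) (A, B)
        = ((k : ℝ) + (l : ℝ) - 2) * Ifun n (k + l - 2) (A, B)) ∧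
    bracket0 (Jfun n 1) (Ifun n 1) (A, B) = (n : ℝ) ∧
    (3 ≤ k + l →
      bracket0 (Jfun n k) (Jfun n l) (A, B)
        = ((l : ℝ) - (k : ℝ)) * Jfun n (k + l - 2) (A, B)) ∧
    bracket0 (Jfun n 1) (Jfun n 1) (A, B) = 0 := by
  obtain ⟨hIkA, hIkB⟩ := grad_Ifun hk (A, B)
  obtain ⟨-, hIlB⟩ := grad_Ifun hl (A, B)
  obtain ⟨hI1A, hI1B⟩ := grad_Ifun le_rfl (A, B)
  have hJk := grad_Jfun k (A, B)
  have hJl := grad_Jfun l (A, B)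
  have hJ1 := grad_Jfun 1 (A, B)
  refine ⟨?_, fun h3 => ?_, ?_, fun h3 => ?_, ?_⟩
  · simp [bracket0, hIkB, hIlB]
  · rw [bracket0, hJl.2, hIkA, hIkB, mul_zero, sub_zero, ← pow_add, Ifun,
      show l - 1 + (k - 1) = k + l - 2 by omega, Nat.cast_sub (by omega : 2 ≤ k + l)]
    have hkl : (k : ℝ) + l - 2 ≠ 0 := by
      have : (3 : ℝ) ≤ k + l := by exact_mod_cast h3
      linarith
    push_cast
    field_simp
  · simp [bracket0, hJ1.2, hI1A, hI1B]
  · rw [bracket0, hJk.2, hJl.2, hJk.1, hJl.1, trace_sub, trace_pow_mul_powDeriv,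
      trace_powDeriv_mul_pow, Jfun, show k - 1 + (l - 1) - 1 = k + l - 2 - 1 by omega,
      show l - 1 + (k - 1) - 1 = k + l - 2 - 1 by omega, Nat.cast_sub hk, Nat.cast_sub hl]
    push_cast
    ring
  · simp [bracket0, hJ1.1, powDeriv]

theorem IJ_bracket0_relations (n : ℕ) (hn : 1 ≤ n) (k l : ℕ)
    (hk : 1 ≤ k) (hl : 1 ≤ l) (A B : Mat n) :
    bracket0 (Ifun n k) (Ifun n l) (A, B) = 0 ∧
    (3 ≤ k + l →
      bracket0 (Jfun n l) (Ifun n k) (A, B)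
        = ((k : ℝ) + (l : ℝ) - 2) * Ifun n (k + l - 2) (A, B)) ∧
    bracket0 (Jfun n 1) (Ifun n 1) (A, B) = (n : ℝ) ∧
    (3 ≤ k + l →
      bracket0 (Jfun n k) (Jfun n l) (A, B)
        = ((l : ℝ) - (k : ℝ)) * Jfun n (k + l - 2) (A, B)) ∧
    bracket0 (Jfun n 1) (Jfun n 1) (A, B) = 0 :=
  IJ_bracket0_relations_general n k l hk hl A B
end

section
/- Rank-one characterization of the Calogero-Moser locus: let n ≥ 2, let x₁,…,x_n be distinct real numbers, B = diag(x₁,…,x_n), and let A ∈ Mat_n(ℝ) be such that the matrix K = [B,A] + I has rank 1. Then there exists an invertible diagonal matrix g ∈ GL(n,ℝ) such that every entry of g([B,A]+I)g⁻¹ equals 1; equivalently, (gAg⁻¹)_{ij} = 1/(x_i − x_j) for all i ≠ j. -/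
/-- Conjugation by the invertible diagonal matrix g = diag(d):  g A g⁻¹. -/
noncomputable def dconj {n : ℕ} (d : Fin n → ℝ) (A : Mat n) : Mat n :=
  Matrix.diagonal d * A * Matrix.diagonal (fun i => (d i)⁻¹)

/-! Since B is diagonal, [B,A] has entries (x_i − x_j) A_ij and so vanishes on the diagonal;
hence K = [B,A] + I is a rank-one matrix with unit diagonal. Writing K = u vᵀ, the diagonal
forces v_i = 1/u_i, so K_ij = u_i / u_j and conjugating by diag(1/u) turns every entry into 1.
Off the diagonal A_ij = K_ij / (x_i − x_j), which gives the second normal form. -/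

namespace Matrix

variable {m n K : Type*} [Field K]

theorem exists_eq_vecMulVec_of_rank_le_one [Fintype n] {M : Matrix m n K} (hM : M.rank ≤ 1) :
    ∃ u v, M = vecMulVec u v := by
  have := Module.Finite.span_of_finite K (Set.finite_range M.col)
  rw [rank_eq_finrank_span_cols, Submodule.finrank_le_one_iff_isPrincipal] at hM
  obtain ⟨u, hu⟩ := hM
  have hcol : ∀ j, ∃ c : K, c • u = M.col j := fun j =>
    Submodule.mem_span_singleton.mp (hu ▸ Submodule.subset_span ⟨j, rfl⟩)
  choose v hv using hcol
  refine ⟨u, v, ext fun i j => ?_⟩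
  rw [vecMulVec_apply, mul_comm, ← smul_eq_mul, ← Pi.smul_apply, hv, col_apply]

theorem exists_eq_div_of_rank_le_one_of_diag_eq_one [Fintype n] {M : Matrix n n K}
    (hM : M.rank ≤ 1) (hdiag : ∀ i, M i i = 1) :
    ∃ u : n → K, (∀ i, u i ≠ 0) ∧ ∀ i j, M i j = u i / u j := by
  obtain ⟨u, v, rfl⟩ := exists_eq_vecMulVec_of_rank_le_one hM
  have huv : ∀ i, u i * v i = 1 := hdiag
  refine ⟨u, fun i => left_ne_zero_of_mul_eq_one (huv i), fun i j => ?_⟩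
  rw [vecMulVec_apply, eq_div_iff (left_ne_zero_of_mul_eq_one (huv j)), mul_assoc,
    mul_comm (v j), huv, mul_one]

theorem diagonal_mul_sub_mul_diagonal_apply [Fintype n] [DecidableEq n] (x : n → K)
    (A : Matrix n n K) (i j : n) :
    (diagonal x * A - A * diagonal x) i j = (x i - x j) * A i j := by
  rw [sub_apply, diagonal_mul, mul_diagonal, sub_mul, mul_comm (A i j)]

end Matrix

theorem dconj_apply {n : ℕ} (d : Fin n → ℝ) (A : Mat n) (i j : Fin n) :
    dconj d A i j = d i * A i j / d j := by
  rw [dconj, Matrix.mul_diagonal, Matrix.diagonal_mul, div_eq_mul_inv]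

open Matrix in
theorem rank_one_calogero_moser_normal_form_general (n : ℕ)
    (x : Fin n → ℝ) (hx : Function.Injective x)
    (B : Mat n) (hB : B = Matrix.diagonal x) (A : Mat n)
    (hK : (B * A - A * B + 1).rank = 1) :
    ∃ d : Fin n → ℝ, (∀ i, d i ≠ 0) ∧
      (∀ i j : Fin n, dconj d (B * A - A * B + 1) i j = 1) ∧
      (∀ i j : Fin n, i ≠ j → dconj d A i j = 1 / (x i - x j)) := by
  subst hB
  have hK_apply : ∀ i j, (diagonal x * A - A * diagonal x + 1) i j
      = (x i - x j) * A i j + (1 : Mat n) i j := fun i j => by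
    rw [Matrix.add_apply, diagonal_mul_sub_mul_diagonal_apply]
  obtain ⟨u, hu, hKu⟩ := exists_eq_div_of_rank_le_one_of_diag_eq_one hK.le
    fun i => by simp [hK_apply]
  refine ⟨fun i => (u i)⁻¹, fun i => inv_ne_zero (hu i), fun i j => ?_, fun i j hij => ?_⟩
  · rw [dconj_apply, hKu]
    field_simp [hu i, hu j]
  · have hA : A i j = u i / u j / (x i - x j) := by
      rw [← hKu, hK_apply, one_apply_ne hij, add_zero,
        mul_div_cancel_left₀ _ (sub_ne_zero.mpr (hx.ne hij))]
    rw [dconj_apply, hA]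
    field_simp [hu i, hu j]

theorem rank_one_calogero_moser_normal_form (n : ℕ) (hn : 2 ≤ n)
    (x : Fin n → ℝ) (hx : Function.Injective x)
    (B : Mat n) (hB : B = Matrix.diagonal x) (A : Mat n)
    (hK : (B * A - A * B + 1).rank = 1) :
    ∃ d : Fin n → ℝ, (∀ i, d i ≠ 0) ∧
      (∀ i j : Fin n, dconj d (B * A - A * B + 1) i j = 1) ∧
      (∀ i j : Fin n, i ≠ j → dconj d A i j = 1 / (x i - x j)) :=
  rank_one_calogero_moser_normal_form_general n x hx B hB A hK
end
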